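/- arXiv:2603.03091 — 5 statements merged into one kernel-verified Lean document; each statement's English description precedes it below -/
import Mathlib

section
/- Let ι be a finite nonempty index type, let a, b : ι → ℝ, and let S be a finite subset of ι such that for every j ∈ S and every k ∉ S we have b k ≤ b j. Define the exponential-weights cold-start probability P : ℝ → ℝ by P(θ) = (Σ_{j ∈ S} exp(-(a j + θ · b j))) / (Σ_{k ∈ ι} exp(-(a k + θ · b k))). Then P is antitone on ℝ, i.e., for all θ₁ ≤ θ₂, P(θ₂) ≤ P(θ₁). -/
open Real Finset

/-- The exponential-weights cold-start probability is antitone in the reported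
cold-start cost. -/
theorem statement0 {ι : Type*} [Fintype ι] [Nonempty ι] (a b : ι → ℝ) (S : Finset ι)
    (hb : ∀ j ∈ S, ∀ k ∉ S, b k ≤ b j)
    (P : ℝ → ℝ)
    (hP : ∀ θ : ℝ, P θ =
      (∑ j ∈ S, Real.exp (-(a j + θ * b j))) / (∑ k : ι, Real.exp (-(a k + θ * b k)))) :
    Antitone P := by
  classical
  intro θ₁ θ₂ h
  rw [hP, hP]
  have hT : ∀ θ : ℝ, 0 < ∑ k : ι, Real.exp (-(a k + θ * b k)) := fun θ =>
    Finset.sum_pos (fun k _ => Real.exp_pos _) Finset.univ_nonempty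
  rw [div_le_div_iff₀ (hT θ₂) (hT θ₁)]
  have hsplit : ∀ θ : ℝ, ∑ k : ι, Real.exp (-(a k + θ * b k)) =
      (∑ j ∈ S, Real.exp (-(a j + θ * b j))) + ∑ j ∈ Sᶜ, Real.exp (-(a j + θ * b j)) :=
    fun θ => (Finset.sum_add_sum_compl S _).symm
  rw [hsplit θ₁, hsplit θ₂]
  have key : (∑ j ∈ S, Real.exp (-(a j + θ₂ * b j))) * (∑ k ∈ Sᶜ, Real.exp (-(a k + θ₁ * b k)))
      ≤ (∑ j ∈ S, Real.exp (-(a j + θ₁ * b j))) * (∑ k ∈ Sᶜ, Real.exp (-(a k + θ₂ * b k))) := by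
    rw [Finset.sum_mul_sum, Finset.sum_mul_sum]
    apply Finset.sum_le_sum
    intro j hj
    apply Finset.sum_le_sum
    intro k hk
    rw [← Real.exp_add, ← Real.exp_add, Real.exp_le_exp]
    have hbk : b k ≤ b j := hb j hj k (Finset.mem_compl.mp hk)
    nlinarith [mul_nonneg (sub_nonneg.mpr h) (sub_nonneg.mpr hbk)]
  nlinarith [key]
end

section
/- Let ι be a finite nonempty index type, a, b : ι → ℝ, and S a finite subset of ι such that b k ≤ b j for every j ∈ S and every k ∉ S. Define P : ℝ → ℝ by P(θ) = (Σ_{j ∈ S} exp(-(a j + θ · b j))) / (Σ_{k ∈ ι} exp(-(a k + θ · b k))). Then the derivative of P is nonpositive at every θ ∈ ℝ, i.e., deriv P θ ≤ 0 for all θ. -/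
open Real Finset

/-- The derivative of the exponential-weights cold-start probability is nonpositive. -/
theorem statement4 {ι : Type*} [Fintype ι] [Nonempty ι] (a b : ι → ℝ) (S : Finset ι)
    (hb : ∀ j ∈ S, ∀ k ∉ S, b k ≤ b j)
    (P : ℝ → ℝ)
    (hP : ∀ θ : ℝ, P θ =
      (∑ j ∈ S, Real.exp (-(a j + θ * b j))) / (∑ k : ι, Real.exp (-(a k + θ * b k)))) :
    ∀ θ : ℝ, deriv P θ ≤ 0 := by
  intro θ
  classical
  set w : ℝ → ι → ℝ := fun t i => Real.exp (-(a i + t * b i)) with hw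
  have hwpos : ∀ t i, 0 < w t i := fun t i => Real.exp_pos _
  have hDpos : 0 < ∑ k : ι, w θ k :=
    Finset.sum_pos (fun i _ => hwpos θ i) Finset.univ_nonempty
  have hder : ∀ i : ι, HasDerivAt (fun t => w t i) (w θ i * (-b i)) θ := by
    intro i
    have h1 : HasDerivAt (fun t : ℝ => -(a i + t * b i)) (-(0 + 1 * b i)) θ :=
      (((hasDerivAt_const θ (a i)).add ((hasDerivAt_id θ).mul_const (b i)))).neg
    have h2 := h1.exp
    convert h2 using 1
    simp only [hw]
    ring
  have hNderiv : HasDerivAt (fun t => ∑ j ∈ S, w t j) (∑ j ∈ S, w θ j * (-b j)) θ :=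
    HasDerivAt.fun_sum (fun j _ => hder j)
  have hDderiv : HasDerivAt (fun t => ∑ k : ι, w t k) (∑ k : ι, w θ k * (-b k)) θ :=
    HasDerivAt.fun_sum (fun k _ => hder k)
  have hPd : HasDerivAt P
      (((∑ j ∈ S, w θ j * (-b j)) * (∑ k : ι, w θ k) -
        (∑ j ∈ S, w θ j) * (∑ k : ι, w θ k * (-b k))) / (∑ k : ι, w θ k) ^ 2) θ := by
    have hPe : P = fun t => (∑ j ∈ S, w t j) / (∑ k : ι, w t k) := funext hP
    rw [hPe]
    exact hNderiv.div hDderiv (ne_of_gt hDpos)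
  rw [hPd.deriv]
  apply div_nonpos_of_nonpos_of_nonneg _ (sq_nonneg _)
  have key : (∑ j ∈ S, w θ j * (-b j)) * (∑ k : ι, w θ k) -
      (∑ j ∈ S, w θ j) * (∑ k : ι, w θ k * (-b k))
      = ∑ j ∈ S, ∑ k : ι, w θ j * w θ k * (b k - b j) := by
    rw [Finset.sum_mul_sum, Finset.sum_mul_sum, ← Finset.sum_sub_distrib]
    refine Finset.sum_congr rfl fun j _ => ?_
    rw [← Finset.sum_sub_distrib]
    exact Finset.sum_congr rfl fun k _ => by ring
  rw [key]
  have hsplit : ∀ j : ι, (∑ k : ι, w θ j * w θ k * (b k - b j)) =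
      (∑ k ∈ S, w θ j * w θ k * (b k - b j)) +
      ∑ k ∈ Sᶜ, w θ j * w θ k * (b k - b j) :=
    fun j => (Finset.sum_add_sum_compl S _).symm
  simp only [hsplit]
  rw [Finset.sum_add_distrib]
  have hzero : (∑ j ∈ S, ∑ k ∈ S, w θ j * w θ k * (b k - b j)) = 0 := by
    have hT : (∑ j ∈ S, ∑ k ∈ S, w θ j * w θ k * (b k - b j)) =
        -(∑ j ∈ S, ∑ k ∈ S, w θ j * w θ k * (b k - b j)) := by
      calc (∑ j ∈ S, ∑ k ∈ S, w θ j * w θ k * (b k - b j))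
          = ∑ k ∈ S, ∑ j ∈ S, w θ j * w θ k * (b k - b j) := Finset.sum_comm
        _ = ∑ k ∈ S, ∑ j ∈ S, -(w θ k * w θ j * (b j - b k)) := by
            refine Finset.sum_congr rfl fun k _ => Finset.sum_congr rfl fun j _ => by ring
        _ = -(∑ j ∈ S, ∑ k ∈ S, w θ j * w θ k * (b k - b j)) := by
            simp [Finset.sum_neg_distrib]
    linarith
  rw [hzero, zero_add]
  apply Finset.sum_nonpos
  intro j hj
  apply Finset.sum_nonpos
  intro k hk
  have hk' : k ∉ S := Finset.mem_compl.mp hk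
  have hbk : b k - b j ≤ 0 := sub_nonpos.mpr (hb j hj k hk')
  exact mul_nonpos_of_nonneg_of_nonpos (by positivity) hbk
end

section
/- Let ι be a finite nonempty index type, a, b : ι → ℝ, and S a finite subset of ι with b k ≤ b j for every j ∈ S and every k ∉ S. Define P(θ) = (Σ_{j ∈ S} exp(-(a j + θ · b j))) / (Σ_{k ∈ ι} exp(-(a k + θ · b k))) and the Myerson payment p(t) = (∫_0^t P(y) dy) - t · P(t). Then for all θ, θ̂ ∈ ℝ, p(θ) + θ · P(θ) ≤ p(θ̂) + θ · P(θ̂); the exponentially weighted average custom keep-alive policy with Myerson payments is incentive compatible. -/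
open Real Finset intervalIntegral

/-- The exponentially weighted average custom keep-alive policy with Myerson
payments is incentive compatible. -/
theorem statement8 {ι : Type*} [Fintype ι] [Nonempty ι] (a b : ι → ℝ) (S : Finset ι)
    (hb : ∀ j ∈ S, ∀ k ∉ S, b k ≤ b j)
    (P : ℝ → ℝ)
    (hP : ∀ θ : ℝ, P θ =
      (∑ j ∈ S, Real.exp (-(a j + θ * b j))) / (∑ k : ι, Real.exp (-(a k + θ * b k))))
    (p : ℝ → ℝ) (hp : ∀ t : ℝ, p t = (∫ y in (0:ℝ)..t, P y) - t * P t) :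
    ∀ θ θhat : ℝ, p θ + θ * P θ ≤ p θhat + θ * P θhat := by
  have hden : ∀ θ : ℝ, 0 < ∑ k : ι, Real.exp (-(a k + θ * b k)) := fun θ =>
    Finset.sum_pos (fun k _ => Real.exp_pos _) Finset.univ_nonempty
  have hPfun : P = fun θ => (∑ j ∈ S, Real.exp (-(a j + θ * b j))) /
      (∑ k : ι, Real.exp (-(a k + θ * b k))) := funext hP
  have hcont : Continuous P := by
    rw [hPfun]
    exact Continuous.div (by continuity) (by continuity) (fun θ => (hden θ).ne')
  classical
  have hanti : Antitone P := by
    intro θ₁ θ₂ h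
    rw [hP, hP, div_le_div_iff₀ (hden θ₂) (hden θ₁)]
    have hsplit : ∀ θ : ℝ, (∑ k : ι, Real.exp (-(a k + θ * b k)))
        = (∑ j ∈ S, Real.exp (-(a j + θ * b j))) +
          (∑ k ∈ Sᶜ, Real.exp (-(a k + θ * b k))) := fun θ =>
      (Finset.sum_add_sum_compl S _).symm
    rw [hsplit θ₁, hsplit θ₂, mul_add, mul_add]
    have key : (∑ j ∈ S, Real.exp (-(a j + θ₂ * b j))) *
        (∑ k ∈ Sᶜ, Real.exp (-(a k + θ₁ * b k)))
        ≤ (∑ j ∈ S, Real.exp (-(a j + θ₁ * b j))) *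
        (∑ k ∈ Sᶜ, Real.exp (-(a k + θ₂ * b k))) := by
      rw [Finset.sum_mul_sum, Finset.sum_mul_sum]
      refine Finset.sum_le_sum fun j hj => Finset.sum_le_sum fun k hk => ?_
      rw [← Real.exp_add, ← Real.exp_add]
      apply Real.exp_le_exp.mpr
      have hbk : b k ≤ b j := hb j hj k (Finset.mem_compl.mp hk)
      nlinarith [mul_nonneg (sub_nonneg.2 h) (sub_nonneg.2 hbk)]
    nlinarith [key]
  intro θ θhat
  rw [hp, hp]
  have hint : ∀ u v : ℝ, IntervalIntegrable P MeasureTheory.volume u v :=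
    fun u v => hcont.intervalIntegrable u v
  have hsub : (∫ y in (0:ℝ)..θ, P y) - (∫ y in (0:ℝ)..θhat, P y)
      = ∫ y in θhat..θ, P y :=
    intervalIntegral.integral_interval_sub_left (hint 0 θ) (hint 0 θhat)
  have hbound : (∫ y in θhat..θ, P y) ≤ (θ - θhat) * P θhat := by
    rcases le_total θhat θ with hle | hle
    · have := intervalIntegral.integral_mono_on hle (hint θhat θ)
        (intervalIntegrable_const (c := _)) (fun x hx => hanti hx.1)
      simpa using this
    · rw [intervalIntegral.integral_symm]
      have := intervalIntegral.integral_mono_on hle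
        (intervalIntegrable_const (c := P θhat)) (hint θ θhat)
        (fun x hx => hanti hx.2)
      simp only [intervalIntegral.integral_const, smul_eq_mul] at this
      nlinarith [this]
  nlinarith [hbound, hsub]
end

section
/- Let ι be a finite nonempty index type, a, b : ι → ℝ, and S a finite subset of ι. Define P(θ) = (Σ_{j ∈ S} exp(-(a j + θ · b j))) / (Σ_{k ∈ ι} exp(-(a k + θ · b k))) and p(t) = (∫_0^t P(y) dy) - t · P(t). Then for every θ ≥ 0, the truthful customer's total cost satisfies p(θ) + θ · P(θ) ≤ θ. -/
open Real Finset intervalIntegral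

/-- Individual rationality for the exponentially weighted average keep-alive
policy with Myerson payments. -/
theorem statement9 {ι : Type*} [Fintype ι] [Nonempty ι] (a b : ι → ℝ) (S : Finset ι)
    (P : ℝ → ℝ)
    (hP : ∀ θ : ℝ, P θ =
      (∑ j ∈ S, Real.exp (-(a j + θ * b j))) / (∑ k : ι, Real.exp (-(a k + θ * b k))))
    (p : ℝ → ℝ) (hp : ∀ t : ℝ, p t = (∫ y in (0:ℝ)..t, P y) - t * P t) :
    ∀ θ : ℝ, 0 ≤ θ → p θ + θ * P θ ≤ θ := by
  intro θ hθ
  have hden : ∀ y : ℝ, 0 < ∑ k : ι, Real.exp (-(a k + y * b k)) := fun y =>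
    Finset.sum_pos (fun k _ => Real.exp_pos _) Finset.univ_nonempty
  have hP1 : ∀ y : ℝ, P y ≤ 1 := by
    intro y
    rw [hP y, div_le_one (hden y)]
    exact Finset.sum_le_sum_of_subset_of_nonneg (Finset.subset_univ S)
      (fun k _ _ => (Real.exp_pos _).le)
  have hPcont : Continuous P := by
    have : Continuous fun y : ℝ =>
        (∑ j ∈ S, Real.exp (-(a j + y * b j))) / (∑ k : ι, Real.exp (-(a k + y * b k))) := by
      apply Continuous.div
      · exact continuous_finset_sum _ fun j _ => by fun_prop
      · exact continuous_finset_sum _ fun k _ => by fun_prop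
      · exact fun y => (hden y).ne'
    exact (funext hP : P = _) ▸ this
  have key : (∫ y in (0:ℝ)..θ, P y) ≤ θ := by
    calc (∫ y in (0:ℝ)..θ, P y) ≤ ∫ _ in (0:ℝ)..θ, (1:ℝ) := by
          apply intervalIntegral.integral_mono_on hθ
            (hPcont.intervalIntegrable _ _) intervalIntegrable_const
          exact fun x _ => hP1 x
      _ = θ := by simp
  rw [hp θ]
  linarith
end

section
/- Let n be a positive natural number and B a real number, and define g : ℝ → ℝ by g(y) = exp(-n·y) / (exp(-n·y) + exp(-B)). Then for every real θ̂, the Myerson payment satisfies (∫_0^θ̂ g(y) dy) - θ̂ · g(θ̂) = θ̂ · exp(n·θ̂ - B)/(1 + exp(n·θ̂ - B)) + (1/n) · log((1 + exp(-B)) / (1 + exp(n·θ̂ - B))). -/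
open Real intervalIntegral

lemma aux_g_eq (n : ℕ) (B y : ℝ) :
    Real.exp (-(n : ℝ) * y) / (Real.exp (-(n : ℝ) * y) + Real.exp (-B))
      = 1 / (1 + Real.exp ((n : ℝ) * y - B)) := by
  rw [div_eq_div_iff]
  · rw [one_mul, mul_add, mul_one, ← Real.exp_add]
    ring_nf
  · positivity
  · positivity

lemma aux_deriv (n : ℕ) (hn : 0 < n) (B y : ℝ) :
    HasDerivAt (fun y : ℝ => y - (1 / (n : ℝ)) * Real.log (1 + Real.exp ((n : ℝ) * y - B)))
      (1 / (1 + Real.exp ((n : ℝ) * y - B))) y := by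
  have hnR : (0:ℝ) < n := by exact_mod_cast hn
  have h1 : HasDerivAt (fun y : ℝ => (n : ℝ) * y - B) n y := by
    simpa using ((hasDerivAt_id y).const_mul (n : ℝ)).sub_const B
  have h2 : HasDerivAt (fun y : ℝ => 1 + Real.exp ((n : ℝ) * y - B))
      (Real.exp ((n : ℝ) * y - B) * n) y := by
    simpa using (h1.exp.const_add 1)
  have hpos : (0:ℝ) < 1 + Real.exp ((n : ℝ) * y - B) := by positivity
  have h3 := (h2.log hpos.ne').const_mul (1 / (n : ℝ))
  have h4 := (hasDerivAt_id y).sub h3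
  convert h4 using 1
  · rfl
  · rfl
  · rfl
  field_simp
  ring

/-- Closed-form Myerson payment for the exponentially weighted average policy
with the two extreme fixed policies `τ = 0` and `τ = ∞`. -/
theorem statement12 (n : ℕ) (hn : 0 < n) (B : ℝ)
    (g : ℝ → ℝ)
    (hg : ∀ y : ℝ, g y = Real.exp (-(n : ℝ) * y) / (Real.exp (-(n : ℝ) * y) + Real.exp (-B))) :
    ∀ θhat : ℝ,
      (∫ y in (0:ℝ)..θhat, g y) - θhat * g θhat
        = θhat * (Real.exp ((n : ℝ) * θhat - B) / (1 + Real.exp ((n : ℝ) * θhat - B)))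
          + (1 / (n : ℝ)) *
            Real.log ((1 + Real.exp (-B)) / (1 + Real.exp ((n : ℝ) * θhat - B))) := by
  intro θ
  have hg' : ∀ y : ℝ, g y = 1 / (1 + Real.exp ((n : ℝ) * y - B)) := fun y => by
    rw [hg y, aux_g_eq]
  have hcont : Continuous g := by
    rw [funext hg']
    exact continuous_const.div (by fun_prop) (fun x => by positivity)
  have hint : (∫ y in (0:ℝ)..θ, g y)
      = (θ - (1 / (n : ℝ)) * Real.log (1 + Real.exp ((n : ℝ) * θ - B)))
        - (0 - (1 / (n : ℝ)) * Real.log (1 + Real.exp ((n : ℝ) * 0 - B))) := by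
    apply intervalIntegral.integral_eq_sub_of_hasDerivAt
    · intro y _
      rw [hg' y]
      exact aux_deriv n hn B y
    · exact (hcont.intervalIntegrable 0 θ)
  have hnR : (0:ℝ) < n := by exact_mod_cast hn
  have hE : (0:ℝ) < 1 + Real.exp ((n : ℝ) * θ - B) := by positivity
  have hE0 : (0:ℝ) < 1 + Real.exp (-B) := by positivity
  rw [hint, hg' θ, Real.log_div hE0.ne' hE.ne']
  have h0 : (n : ℝ) * 0 - B = -B := by ring
  rw [h0]
  field_simp
  ring
end
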